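/- For every odd positive integer m = 2k+1 and integer n, the number of partitions of n into distinct parts whose smallest missing odd positive integer equals m is the number of pairs (μ, ν) with |μ| + |ν| = n − k^2, where μ is a partition into distinct even parts and ν is a partition into distinct odd parts each greater than 2k+1. -/

import Mathlib

open Finset

/-- The set of partitions of `n` into distinct parts, encoded as finsets of
positive integers summing to `n`. -/
def Dpart (n : ℕ) : Finset (Finset ℕ) :=
  (Finset.Icc 1 n).powerset.filter (fun S => S.sum id = n)

/-- The minimal odd excludant: the least odd positive integer not occurring as a part. -/
noncomputable def pmoex (S : Finset ℕ) : ℕ := sInf {m : ℕ | Odd m ∧ m ∉ S}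

/-!
A partition `S` with `pmoex S = 2k+1` is exactly `μ ∪ ν ∪ {1, 3, …, 2k-1}`, where `μ` collects
the even parts of `S` and `ν` its odd parts above `2k+1`. The three pieces are disjoint and the
last one sums to `k²`, so splitting `S` into `(μ, ν)` and reassembling are mutually inverse
bijections between the two sides.
-/

lemma mem_Dpart {n : ℕ} {S : Finset ℕ} : S ∈ Dpart n ↔ 0 ∉ S ∧ S.sum id = n := by
  simp only [Dpart, mem_filter, mem_powerset]
  refine ⟨fun ⟨hS, hsum⟩ => ⟨fun h0 => by simpa using hS h0, hsum⟩, fun ⟨h0, hsum⟩ => ⟨?_, hsum⟩⟩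
  intro x hx
  have : x ≤ n := hsum ▸ single_le_sum (f := id) (fun _ _ => Nat.zero_le _) hx
  grind

def oddsBelow (k : ℕ) : Finset ℕ := (range k).image (fun j => 2 * j + 1)

lemma mem_oddsBelow {k x : ℕ} : x ∈ oddsBelow k ↔ Odd x ∧ x < 2 * k + 1 := by
  simp only [oddsBelow, mem_image, mem_range, Nat.odd_iff]
  constructor
  · rintro ⟨j, hj, rfl⟩
    omega
  · rintro ⟨hodd, hlt⟩
    exact ⟨x / 2, by omega, by omega⟩

lemma sum_oddsBelow (k : ℕ) : (oddsBelow k).sum id = k ^ 2 := by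
  rw [oddsBelow, sum_image fun a _ b _ h => by omega]
  induction k with
  | zero => simp
  | succ k ih =>
    rw [sum_range_succ, ih, id_eq]
    ring

lemma pmoex_eq_iff {S : Finset ℕ} {k : ℕ} :
    pmoex S = 2 * k + 1 ↔ 2 * k + 1 ∉ S ∧ oddsBelow k ⊆ S := by
  simp only [subset_iff, mem_oddsBelow, and_imp]
  constructor
  · intro h
    have hmem : Odd (pmoex S) ∧ pmoex S ∉ S := Nat.sInf_mem (Nat.nonempty_of_sInf_eq_succ h)
    refine ⟨h ▸ hmem.2, fun b hb hlt => ?_⟩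
    by_contra hbS
    exact (h ▸ hlt).not_ge (Nat.sInf_le ⟨hb, hbS⟩)
  · rintro ⟨hnot, hbelow⟩
    refine IsLeast.csInf_eq ⟨⟨odd_two_mul_add_one k, hnot⟩, fun m ⟨hm, hmS⟩ => ?_⟩
    exact not_lt.mp fun hlt => hmS (hbelow hm hlt)

lemma union_filter_union_oddsBelow_of_pmoex_eq {S : Finset ℕ} {k : ℕ}
    (h : pmoex S = 2 * k + 1) :
    S.filter Even ∪ S.filter (fun x => Odd x ∧ 2 * k + 1 < x) ∪ oddsBelow k = S := by
  obtain ⟨hnot, hbelow⟩ := pmoex_eq_iff.mp h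
  ext x
  grind [mem_oddsBelow, Nat.not_even_iff_odd]

lemma natCast_eq_sub_sq_iff {a n k : ℕ} : (a : ℤ) = n - (k : ℤ) ^ 2 ↔ a + k ^ 2 = n := by
  rw [eq_sub_iff_add_eq]
  norm_cast

section Reassemble

variable {k : ℕ} {μ ν : Finset ℕ}

lemma sum_union_union_oddsBelow (hμ : ∀ x ∈ μ, Even x) (hν : ∀ x ∈ ν, Odd x ∧ 2 * k + 1 < x) :
    (μ ∪ ν ∪ oddsBelow k).sum id = μ.sum id + ν.sum id + k ^ 2 := by
  have hμν : Disjoint μ ν := disjoint_left.mpr fun x hxμ hxν =>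
    Nat.not_even_iff_odd.mpr (hν x hxν).1 (hμ x hxμ)
  have hodds : Disjoint (μ ∪ ν) (oddsBelow k) := disjoint_left.mpr fun x hx hxo => by
    grind [mem_oddsBelow, Nat.not_even_iff_odd]
  rw [sum_union hodds, sum_union hμν, sum_oddsBelow]

lemma pmoex_union_union_oddsBelow (hμ : ∀ x ∈ μ, Even x)
    (hν : ∀ x ∈ ν, Odd x ∧ 2 * k + 1 < x) :
    pmoex (μ ∪ ν ∪ oddsBelow k) = 2 * k + 1 :=
  pmoex_eq_iff.mpr ⟨by grind [mem_oddsBelow, Nat.not_even_iff_odd], subset_union_right⟩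

lemma filter_even_union_union_oddsBelow (hμ : ∀ x ∈ μ, Even x)
    (hν : ∀ x ∈ ν, Odd x ∧ 2 * k + 1 < x) :
    (μ ∪ ν ∪ oddsBelow k).filter Even = μ := by
  ext x
  grind [mem_oddsBelow, Nat.not_even_iff_odd]

lemma filter_odd_union_union_oddsBelow (hμ : ∀ x ∈ μ, Even x)
    (hν : ∀ x ∈ ν, Odd x ∧ 2 * k + 1 < x) :
    (μ ∪ ν ∪ oddsBelow k).filter (fun x => Odd x ∧ 2 * k + 1 < x) = ν := by
  ext x
  grind [mem_oddsBelow, Nat.not_even_iff_odd]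

end Reassemble

/-- The number of distinct-parts partitions of `n` with smallest missing odd part equal
to `2k+1` equals the number of pairs `(μ, ν)` with `|μ| + |ν| = n − k²`, where `μ` is a
partition into distinct even parts and `ν` a partition into distinct odd parts each
greater than `2k+1`. -/
theorem stmt_16 (k n : ℕ) :
    ((Dpart n).filter (fun S => pmoex S = 2 * k + 1)).card =
      (((Finset.Icc 1 n).powerset ×ˢ (Finset.Icc 1 n).powerset).filter
        (fun p => (∀ x ∈ p.1, Even x) ∧ (∀ x ∈ p.2, Odd x ∧ 2 * k + 1 < x) ∧
          ((p.1.sum id + p.2.sum id : ℕ) : ℤ) = (n : ℤ) - (k : ℤ) ^ 2)).card := by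
  refine card_nbij' (fun S => (S.filter Even, S.filter (fun x => Odd x ∧ 2 * k + 1 < x)))
    (fun p => p.1 ∪ p.2 ∪ oddsBelow k) ?_ ?_ ?_ ?_
  · intro S hS
    simp only [coe_filter, Dpart, mem_filter, mem_powerset, Set.mem_ofPred_eq] at hS
    obtain ⟨⟨hSn, hsum⟩, hmoex⟩ := hS
    have hμ : ∀ x ∈ S.filter Even, Even x := fun _ hx => (mem_filter.mp hx).2
    have hν : ∀ x ∈ S.filter (fun x => Odd x ∧ 2 * k + 1 < x), Odd x ∧ 2 * k + 1 < x :=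
      fun _ hx => (mem_filter.mp hx).2
    have hsplit := sum_union_union_oddsBelow hμ hν
    rw [union_filter_union_oddsBelow_of_pmoex_eq hmoex, hsum] at hsplit
    simp only [coe_filter, Set.mem_ofPred_eq, mem_product, mem_powerset]
    exact ⟨⟨(filter_subset _ _).trans hSn, (filter_subset _ _).trans hSn⟩, hμ, hν,
      natCast_eq_sub_sq_iff.mpr hsplit.symm⟩
  · rintro ⟨μ, ν⟩ hp
    simp only [coe_filter, mem_product, mem_powerset, Set.mem_ofPred_eq] at hp ⊢
    obtain ⟨⟨hμn, hνn⟩, hμ, hν, hsum⟩ := hp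
    refine ⟨mem_Dpart.mpr ⟨?_, ?_⟩, pmoex_union_union_oddsBelow hμ hν⟩
    · grind [mem_oddsBelow]
    · rw [sum_union_union_oddsBelow hμ hν]
      exact natCast_eq_sub_sq_iff.mp hsum
  · intro S hS
    exact union_filter_union_oddsBelow_of_pmoex_eq (mem_filter.mp hS).2
  · rintro ⟨μ, ν⟩ hp
    obtain ⟨-, hμ, hν, -⟩ := mem_filter.mp hp
    exact Prod.ext (filter_even_union_union_oddsBelow hμ hν)
      (filter_odd_union_union_oddsBelow hμ hν)
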